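/- arXiv:1501.05806 — 5 statements merged into one kernel-verified Lean document; each statement's English description precedes it below -/
import Mathlib

section
/- Let F be a field and let A be a unital F-algebra of F-vector-space dimension greater than 1 whose only two-sided ideals are the zero ideal and A itself (i.e., A is simple). If a subset S of A generates A as a unital F-algebra (the unital subalgebra generated by S is all of A), then the non-unital F-subalgebra generated by S is also all of A. -/
/-!
Let `N` be the non-unital subalgebra generated by `S`. Since `S` generates `A` as a unital
algebra, so does `N`, i.e. every element of `A` is a polynomial in elements of `N` with a
constant term; multiplying an element of `N` by such a polynomial stays in `N`, so `N` is a
two-sided ideal. By simplicity `N = 0` or `N = A`, and `N = 0` would force `A = F · 1`,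
contradicting `dim A > 1`.
-/

namespace NonUnitalSubalgebra

variable {R A : Type*} [CommRing R] [Ring A] [Algebra R A] {N : NonUnitalSubalgebra R A}

theorem mul_mem_left_of_adjoin_eq_top (hN : Algebra.adjoin R (N : Set A) = ⊤) (x : A) {y : A}
    (hy : y ∈ N) : x * y ∈ N := by
  have hx : x ∈ Algebra.adjoin R (N : Set A) := hN ▸ Algebra.mem_top
  induction hx using Algebra.adjoin_induction generalizing y with
  | mem x hx => exact mul_mem hx hy
  | algebraMap r => simpa only [← Algebra.smul_def] using SMulMemClass.smul_mem r hy
  | add x z _ _ hx hz => simpa only [add_mul] using add_mem (hx hy) (hz hy)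
  | mul x z _ _ hx hz =>
    rw [mul_assoc]
    exact hx (hz hy)

theorem mul_mem_right_of_adjoin_eq_top (hN : Algebra.adjoin R (N : Set A) = ⊤) {x : A}
    (hx : x ∈ N) (y : A) : x * y ∈ N := by
  have hy : y ∈ Algebra.adjoin R (N : Set A) := hN ▸ Algebra.mem_top
  induction hy using Algebra.adjoin_induction generalizing x with
  | mem y hy => exact mul_mem hx hy
  | algebraMap r =>
    simpa only [← Algebra.commutes, ← Algebra.smul_def] using SMulMemClass.smul_mem r hx
  | add y z _ _ hy hz => simpa only [mul_add] using add_mem (hy hx) (hz hx)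
  | mul y z _ _ hy hz =>
    rw [← mul_assoc]
    exact hz (hy hx)

def toTwoSidedIdealOfAdjoinEqTop (N : NonUnitalSubalgebra R A)
    (hN : Algebra.adjoin R (N : Set A) = ⊤) : TwoSidedIdeal A :=
  TwoSidedIdeal.mk' N (zero_mem N) (add_mem · ·) (neg_mem ·)
    (mul_mem_left_of_adjoin_eq_top hN _) (mul_mem_right_of_adjoin_eq_top hN · _)

@[simp]
theorem mem_toTwoSidedIdealOfAdjoinEqTop (hN : Algebra.adjoin R (N : Set A) = ⊤) {x : A} :
    x ∈ N.toTwoSidedIdealOfAdjoinEqTop hN ↔ x ∈ N :=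
  TwoSidedIdeal.mem_mk' ..

end NonUnitalSubalgebra

theorem Subalgebra.rank_le_one_of_bot_eq_top {R A : Type*} [CommRing R] [StrongRankCondition R]
    [Ring A] [Algebra R A] (h : (⊥ : Subalgebra R A) = ⊤) : Module.rank R A ≤ 1 := by
  calc Module.rank R A = Module.rank R (Subalgebra.toSubmodule (⊤ : Subalgebra R A)) :=
        rank_top.symm
    _ = Module.rank R (Submodule.span R {(1 : A)}) := by
        rw [← h, Algebra.toSubmodule_bot, Submodule.one_eq_span]
    _ ≤ 1 := by simpa using rank_span_le (R := R) {(1 : A)}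

/-- If `A` is a simple unital `F`-algebra of dimension greater than `1` and `S` generates
`A` as a unital `F`-algebra, then `S` generates `A` as a non-unital `F`-algebra. -/
theorem stmt_0 (F : Type*) [Field F] (A : Type*) [Ring A] [Algebra F A]
    (hdim : 1 < Module.rank F A)
    (hsimple : ∀ I : TwoSidedIdeal A, I = ⊥ ∨ I = ⊤)
    (S : Set A) (hS : Algebra.adjoin F S = ⊤) :
    NonUnitalAlgebra.adjoin F S = ⊤ := by
  set N := NonUnitalAlgebra.adjoin F S
  have hN : Algebra.adjoin F (N : Set A) = ⊤ := (Algebra.adjoin_nonUnitalSubalgebra F S).trans hS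
  rcases hsimple (N.toTwoSidedIdealOfAdjoinEqTop hN) with hbot | htop
  · have hN_zero : (N : Set A) = {0} := by
      ext x
      rw [SetLike.mem_coe, ← N.mem_toTwoSidedIdealOfAdjoinEqTop hN, hbot]
      simp
    rw [hN_zero, Algebra.adjoin_singleton_zero] at hN
    exact absurd (Subalgebra.rank_le_one_of_bot_eq_top hN) hdim.not_ge
  · ext x
    simp [← N.mem_toTwoSidedIdealOfAdjoinEqTop hN, htop]
end

section
/- Let n ≥ 1 and let S be a subset of M_n(ℂ) whose generated unital subalgebra is all of M_n(ℂ). If l(S) ≥ n and the ℂ-linear span of S contains an invertible matrix, then l(S) = l_0(S). -/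
/-- `L_k(S)`: the ℂ-linear span of all words in `S` of length at most `k`
(including the empty word, the identity matrix). -/
noncomputable def wordSpan (n k : ℕ) (S : Set (Matrix (Fin n) (Fin n) ℂ)) :
    Submodule ℂ (Matrix (Fin n) (Fin n) ℂ) :=
  Submodule.span ℂ {M | ∃ w : List (Matrix (Fin n) (Fin n) ℂ),
    w.length ≤ k ∧ (∀ x ∈ w, x ∈ S) ∧ M = w.prod}

/-- `L_k^0(S)`: the ℂ-linear span of all words in `S` of length between `1` and `k`. -/
noncomputable def wordSpan0 (n k : ℕ) (S : Set (Matrix (Fin n) (Fin n) ℂ)) :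
    Submodule ℂ (Matrix (Fin n) (Fin n) ℂ) :=
  Submodule.span ℂ {M | ∃ w : List (Matrix (Fin n) (Fin n) ℂ),
    1 ≤ w.length ∧ w.length ≤ k ∧ (∀ x ∈ w, x ∈ S) ∧ M = w.prod}

/-! Since `l(S) ≥ n`, it suffices to show `1 ∈ L_n^0(S)`: then every word of length at most
`l = l(S)`, the empty one included, lies in `L_l^0(S)`, so `L_l^0(S) = L_l(S) = M_n(ℂ)` and
`l_0(S) ≤ l(S)`; the reverse inequality holds because `L_k^0(S) ≤ L_k(S)`. If `A ∈ span S` is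
invertible, Cayley–Hamilton writes `1` as a combination of `A, A², …, Aⁿ`, and `Aⁱ` is a
combination of words of length `i`. -/

/-- Cayley–Hamilton gives `χ_A(0) • 1 = -∑_{i<n} cᵢ₊₁ Aⁱ⁺¹`, and `χ_A(0) = ± det A ≠ 0`. -/
theorem Matrix.one_mem_span_pow_succ_of_isUnit {m K : Type*} [Fintype m] [DecidableEq m]
    [Field K] {A : Matrix m m K} (hA : IsUnit A) :
    (1 : Matrix m m K) ∈
      Submodule.span K ((fun i => A ^ (i + 1)) '' ↑(Finset.range (Fintype.card m))) := by
  have hcoeff : A.charpoly.coeff 0 ≠ 0 := by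
    have hdet := (A.isUnit_iff_isUnit_det.mp hA).ne_zero
    rw [Matrix.det_eq_sign_charpoly_coeff] at hdet
    exact right_ne_zero_of_mul hdet
  have hCH := A.aeval_self_charpoly
  rw [Polynomial.aeval_eq_sum_range, A.charpoly_natDegree_eq_dim, Finset.sum_range_succ',
    pow_zero] at hCH
  have hconst : A.charpoly.coeff 0 • (1 : Matrix m m K) =
      -∑ i ∈ Finset.range (Fintype.card m), A.charpoly.coeff (i + 1) • A ^ (i + 1) := by
    linear_combination (norm := module) hCH
  rw [← one_smul K (1 : Matrix m m K), ← inv_mul_cancel₀ hcoeff, ← smul_smul, hconst]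
  refine Submodule.smul_mem _ _ (Submodule.neg_mem _ <|
    Submodule.sum_mem _ fun i hi => Submodule.smul_mem _ _ ?_)
  exact Submodule.subset_span ⟨i, hi, rfl⟩

section WordSpan

open scoped Pointwise

variable {n : ℕ} {S : Set (Matrix (Fin n) (Fin n) ℂ)}

theorem wordSpan_mono {k k' : ℕ} (h : k ≤ k') : wordSpan n k S ≤ wordSpan n k' S :=
  Submodule.span_mono fun _ ⟨w, hw, hwS, hM⟩ => ⟨w, hw.trans h, hwS, hM⟩

theorem wordSpan0_mono {k k' : ℕ} (h : k ≤ k') : wordSpan0 n k S ≤ wordSpan0 n k' S :=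
  Submodule.span_mono fun _ ⟨w, h1, hw, hwS, hM⟩ => ⟨w, h1, hw.trans h, hwS, hM⟩

theorem wordSpan0_le_wordSpan (k : ℕ) : wordSpan0 n k S ≤ wordSpan n k S :=
  Submodule.span_mono fun _ ⟨w, _, hw, hwS, hM⟩ => ⟨w, hw, hwS, hM⟩

theorem wordSpan_eq_wordSpan0_of_one_mem {k : ℕ} (h1 : 1 ∈ wordSpan0 n k S) :
    wordSpan n k S = wordSpan0 n k S := by
  refine le_antisymm (Submodule.span_le.mpr ?_) (wordSpan0_le_wordSpan k)
  rintro _ ⟨w, hw, hwS, rfl⟩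
  rcases w.length.eq_zero_or_pos with hnil | hpos
  · rwa [List.length_eq_zero_iff.mp hnil, List.prod_nil]
  · exact Submodule.subset_span ⟨w, hpos, hw, hwS, rfl⟩

/-- The chain `L_0(S) ≤ L_1(S) ≤ ⋯` stabilises in the finite-dimensional space `M_n(ℂ)`, and its
limit contains every word in `S`, hence the unital algebra generated by `S`. -/
theorem exists_wordSpan_eq_top (hgen : Algebra.adjoin ℂ S = ⊤) : ∃ k, wordSpan n k S = ⊤ := by
  obtain ⟨N, hN⟩ := WellFoundedGT.monotone_chain_condition
    (⟨fun k => wordSpan n k S, fun _ _ => wordSpan_mono⟩ : ℕ →o Submodule ℂ _)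
  refine ⟨N, eq_top_iff.mpr ?_⟩
  rw [← Algebra.top_toSubmodule, ← hgen, Algebra.adjoin_eq_span, Submodule.span_le]
  intro M hM
  obtain ⟨w, hwS, rfl⟩ := Submonoid.exists_list_of_mem_closure hM
  have hstable : wordSpan n N S = wordSpan n (max N w.length) S := hN _ (le_max_left _ _)
  rw [SetLike.mem_coe, hstable]
  exact wordSpan_mono (le_max_right _ _) (Submodule.subset_span ⟨w, le_rfl, hwS, rfl⟩)

theorem pow_mem_wordSpan0 {A : Matrix (Fin n) (Fin n) ℂ} (hA : A ∈ Submodule.span ℂ S)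
    {i k : ℕ} (hi : 1 ≤ i) (hik : i ≤ k) : A ^ i ∈ wordSpan0 n k S := by
  have hpow : A ^ i ∈ Submodule.span ℂ (S ^ i) :=
    Submodule.span_pow (R := ℂ) S i ▸ Submodule.pow_mem_pow _ hA i
  refine Submodule.span_le.mpr ?_ hpow
  intro M hM
  obtain ⟨f, rfl⟩ := Set.mem_pow.mp hM
  refine Submodule.subset_span ⟨List.ofFn fun j => (f j : Matrix (Fin n) (Fin n) ℂ),
    by simpa using hi, by simpa using hik, ?_, rfl⟩
  simp only [List.mem_ofFn]
  rintro _ ⟨j, rfl⟩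
  exact (f j).2

theorem one_mem_wordSpan0 {A : Matrix (Fin n) (Fin n) ℂ} (hA : A ∈ Submodule.span ℂ S)
    (hunit : IsUnit A) : 1 ∈ wordSpan0 n n S := by
  have h1 := Matrix.one_mem_span_pow_succ_of_isUnit hunit
  rw [Fintype.card_fin] at h1
  refine Submodule.span_le.mpr ?_ h1
  rintro _ ⟨i, hi, rfl⟩
  exact pow_mem_wordSpan0 hA (Nat.le_add_left 1 i) (Finset.mem_range.mp hi)

end WordSpan

theorem stmt_1_general (n : ℕ) (S : Set (Matrix (Fin n) (Fin n) ℂ))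
    (hgen : Algebra.adjoin ℂ S = ⊤)
    (hlen : n ≤ sInf {k | wordSpan n k S = ⊤})
    (hinv : ∃ A ∈ Submodule.span ℂ S, IsUnit A) :
    sInf {k | wordSpan n k S = ⊤} = sInf {k | wordSpan0 n k S = ⊤} := by
  obtain ⟨A, hA, hunit⟩ := hinv
  set l := sInf {k | wordSpan n k S = ⊤}
  have hl : wordSpan n l S = ⊤ := Nat.sInf_mem (exists_wordSpan_eq_top hgen)
  have hl0 : wordSpan0 n l S = ⊤ := by
    rwa [← wordSpan_eq_wordSpan0_of_one_mem (wordSpan0_mono hlen (one_mem_wordSpan0 hA hunit))]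
  have hsub : ∀ k, wordSpan0 n k S = ⊤ → wordSpan n k S = ⊤ :=
    fun k hk => top_unique (hk ▸ wordSpan0_le_wordSpan k)
  have hl0_min : wordSpan0 n (sInf {k | wordSpan0 n k S = ⊤}) S = ⊤ :=
    Nat.sInf_mem (s := {k | wordSpan0 n k S = ⊤}) ⟨l, hl0⟩
  exact le_antisymm (Nat.sInf_le (hsub _ hl0_min)) (Nat.sInf_le hl0)

/-- If `S` generates `M_n(ℂ)`, `l(S) ≥ n` and the linear span of `S` contains an
invertible matrix, then `l(S) = l_0(S)`. -/
theorem stmt_1 (n : ℕ) (hn : 1 ≤ n) (S : Set (Matrix (Fin n) (Fin n) ℂ))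
    (hgen : Algebra.adjoin ℂ S = ⊤)
    (hlen : n ≤ sInf {k | wordSpan n k S = ⊤})
    (hinv : ∃ A ∈ Submodule.span ℂ S, IsUnit A) :
    sInf {k | wordSpan n k S = ⊤} = sInf {k | wordSpan0 n k S = ⊤} :=
  stmt_1_general n S hgen hlen hinv
end

section
/- Let n ≥ 3, let J_n ∈ M_n(ℂ) be the nilpotent Jordan block ((J_n)_{a,b} = 1 if b = a + 1 and 0 otherwise), and let B_n = E_{n−1,1} − E_{n,2} ∈ M_n(ℂ). Then the unital subalgebra of M_n(ℂ) generated by {J_n, B_n} is all of M_n(ℂ). -/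
/-- The `n × n` nilpotent Jordan block over `ℂ`. -/
def jordan (n : ℕ) : Matrix (Fin n) (Fin n) ℂ :=
  Matrix.of fun a b => if (a : ℕ) + 1 = (b : ℕ) then 1 else 0

/-!
Multiplying by `J` on the left moves a matrix unit up a row and on the right moves it one
column to the right, so a subalgebra containing `J` and one `E_{kj}` contains every `E_{ij}` with
`i ≤ k`, and one containing `E_{ij}` contains every `E_{ik}` with `j ≤ k`. Now `J^{n-1} B = -E_{12}`
puts a matrix unit in the algebra; shifting it right gives the first row except `E_{11}`, which
is `E_{1,n-1} B`. Then `B E_{1j} = E_{n-1,j}`, shifting up gives rows `1, …, n-1`, and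
`B E_{2j} = -E_{nj}` gives the last row.
-/

open Matrix

theorem Subalgebra.eq_top_of_single_one_mem {R ι : Type*} [CommSemiring R] [Fintype ι]
    [DecidableEq ι] (A : Subalgebra R (Matrix ι ι R)) (h : ∀ i j, single i j (1 : R) ∈ A) :
    A = ⊤ :=
  eq_top_iff.2 fun M _ ↦ Matrix.induction_on' M A.zero_mem (fun _ _ ↦ A.add_mem)
    fun i j c ↦ by simpa [smul_single] using A.smul_mem (h i j) c

section jordan

variable {n : ℕ}

theorem jordan_mul_single {i k : Fin n} (h : (i : ℕ) + 1 = k) (j : Fin n) (c : ℂ) :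
    jordan n * single k j c = single i j c := by
  ext a b
  rcases eq_or_ne b j with rfl | hb
  · rw [mul_single_apply_same, single_apply, jordan, of_apply]
    simp [Fin.ext_iff, ← h, eq_comm]
  · rw [mul_single_apply_of_ne _ _ _ _ _ hb, single_apply_of_col_ne _ _ hb.symm]

theorem jordan_mul_single_of_val_eq_zero {k : Fin n} (h : (k : ℕ) = 0) (j : Fin n) (c : ℂ) :
    jordan n * single k j c = 0 := by
  ext a b
  rcases eq_or_ne b j with rfl | hb
  · simp [jordan, h]
  · simp [hb]

theorem single_mul_jordan {j k : Fin n} (h : (j : ℕ) + 1 = k) (i : Fin n) (c : ℂ) :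
    single i j c * jordan n = single i k c := by
  ext a b
  rcases eq_or_ne a i with rfl | ha
  · rw [single_mul_apply_same, single_apply, jordan, of_apply]
    simp [Fin.ext_iff, ← h, eq_comm]
  · rw [single_mul_apply_of_ne _ _ _ _ _ ha, single_apply_of_row_ne (Ne.symm ha)]

theorem jordan_pow_mul_single {i k : Fin n} {m : ℕ} (h : (i : ℕ) + m = k) (j : Fin n) (c : ℂ) :
    jordan n ^ m * single k j c = single i j c := by
  induction m generalizing i with
  | zero =>
    obtain rfl : i = k := Fin.ext (by simpa using h)
    rw [pow_zero, one_mul]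
  | succ m ih =>
    rw [pow_succ', mul_assoc, ih (i := ⟨i + 1, by omega⟩) (by simp; omega)]
    exact jordan_mul_single rfl j c

theorem jordan_pow_mul_single_of_lt {k : Fin n} {m : ℕ} (h : (k : ℕ) < m) (j : Fin n) (c : ℂ) :
    jordan n ^ m * single k j c = 0 := by
  obtain ⟨d, rfl⟩ : ∃ d, m = d + 1 + k := ⟨m - k - 1, by omega⟩
  rw [pow_add, pow_succ, mul_assoc, mul_assoc,
    jordan_pow_mul_single (i := ⟨0, by omega⟩) (by simp) j c,
    jordan_mul_single_of_val_eq_zero rfl, mul_zero]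

theorem single_mul_jordan_pow {j k : Fin n} {m : ℕ} (h : (j : ℕ) + m = k) (i : Fin n) (c : ℂ) :
    single i j c * jordan n ^ m = single i k c := by
  induction m generalizing j with
  | zero =>
    obtain rfl : j = k := Fin.ext (by simpa using h)
    rw [pow_zero, mul_one]
  | succ m ih =>
    rw [pow_succ', ← mul_assoc, single_mul_jordan (k := ⟨j + 1, by omega⟩) rfl,
      ih (by simp; omega)]

variable {A : Subalgebra ℂ (Matrix (Fin n) (Fin n) ℂ)}

theorem single_mem_of_le_row (hJ : jordan n ∈ A) {i k j : Fin n} (hik : i ≤ k)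
    (h : single k j 1 ∈ A) : single i j 1 ∈ A := by
  rw [← jordan_pow_mul_single (k := k) (m := k - i) (by omega)]
  exact mul_mem (pow_mem hJ _) h

theorem single_mem_of_le_col (hJ : jordan n ∈ A) {i j k : Fin n} (hjk : j ≤ k)
    (h : single i j 1 ∈ A) : single i k 1 ∈ A := by
  rw [← single_mul_jordan_pow (j := j) (k := k) (m := k - j) (by omega)]
  exact mul_mem h (pow_mem hJ _)

end jordan

section partner

variable (m : ℕ)

/-- `B_{m+3}`: the paper's indices `n - 1, n, 1, 2` become `m + 1, m + 2, 0, 1`. -/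
def jordanPartner : Matrix (Fin (m + 3)) (Fin (m + 3)) ℂ :=
  single (Fin.last (m + 1)).castSucc 0 1 - single (Fin.last (m + 2)) 1 1

theorem jordan_pow_mul_jordanPartner :
    jordan (m + 3) ^ (m + 2) * jordanPartner m = -single 0 1 1 := by
  rw [jordanPartner, mul_sub,
    jordan_pow_mul_single_of_lt (k := (Fin.last (m + 1)).castSucc) (by simp),
    jordan_pow_mul_single (i := 0) (by simp), zero_sub]

theorem single_mul_jordanPartner (i : Fin (m + 3)) :
    single i (Fin.last (m + 1)).castSucc 1 * jordanPartner m = single i 0 1 := by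
  rw [jordanPartner, mul_sub, single_mul_single_same, mul_one,
    single_mul_single_of_ne (h := (Fin.castSucc_lt_last _).ne), sub_zero]

theorem jordanPartner_mul_single_zero (j : Fin (m + 3)) :
    jordanPartner m * single 0 j 1 = single (Fin.last (m + 1)).castSucc j 1 := by
  rw [jordanPartner, sub_mul, single_mul_single_same, mul_one,
    single_mul_single_of_ne (h := (by simp)), sub_zero]

theorem jordanPartner_mul_single_one (j : Fin (m + 3)) :
    jordanPartner m * single 1 j 1 = -single (Fin.last (m + 2)) j 1 := by
  rw [jordanPartner, sub_mul, single_mul_single_same, mul_one,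
    single_mul_single_of_ne (h := (by simp)), zero_sub]

theorem adjoin_jordan_jordanPartner_eq_top :
    Algebra.adjoin ℂ {jordan (m + 3), jordanPartner m} = ⊤ := by
  set A := Algebra.adjoin ℂ {jordan (m + 3), jordanPartner m}
  have hJ : jordan (m + 3) ∈ A := Algebra.subset_adjoin (by simp)
  have hB : jordanPartner m ∈ A := Algebra.subset_adjoin (by simp)
  have h01 : single 0 1 1 ∈ A := by
    simpa [jordan_pow_mul_jordanPartner] using neg_mem (mul_mem (pow_mem hJ (m + 2)) hB)
  have hrow0 : ∀ j, single 0 j 1 ∈ A := by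
    intro j
    rcases eq_or_ne j 0 with rfl | hj
    · rw [← single_mul_jordanPartner]
      exact mul_mem (single_mem_of_le_col hJ (by simp [Fin.le_def]) h01) hB
    · exact single_mem_of_le_col hJ (Fin.one_le_of_ne_zero hj) h01
  have hrow : ∀ j, single (Fin.last (m + 1)).castSucc j 1 ∈ A := fun j ↦ by
    rw [← jordanPartner_mul_single_zero]
    exact mul_mem hB (hrow0 j)
  refine Subalgebra.eq_top_of_single_one_mem A fun i j ↦ ?_
  rcases Fin.eq_castSucc_or_eq_last i with ⟨i, rfl⟩ | rfl
  · exact single_mem_of_le_row hJ (Fin.castSucc_le_castSucc_iff.2 (Fin.le_last i)) (hrow j)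
  · rw [← neg_neg (single _ _ _), ← jordanPartner_mul_single_one]
    exact neg_mem (mul_mem hB (single_mem_of_le_row hJ (by simp [Fin.le_def]) (hrow j)))

end partner

/-- For `n ≥ 3`, the matrices `J_n` and `B_n = E_{n-1,1} - E_{n,2}` generate `M_n(ℂ)`
as a unital algebra. -/
theorem stmt_7 (n : ℕ) (hn : 3 ≤ n) :
    Algebra.adjoin ℂ
      ({jordan n,
        Matrix.single ⟨n - 2, by omega⟩ ⟨0, by omega⟩ (1 : ℂ) -
          Matrix.single ⟨n - 1, by omega⟩ ⟨1, by omega⟩ (1 : ℂ)} :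
        Set (Matrix (Fin n) (Fin n) ℂ)) = ⊤ := by
  obtain ⟨m, rfl⟩ := Nat.exists_eq_add_of_le' hn
  -- `m + 3 - 2` reduces to `m + 1`, so the generator is `jordanPartner m` definitionally.
  exact adjoin_jordan_jordanPartner_eq_top m
end

section
/- Let n and i be positive integers with i < n, let J_n ∈ M_n(ℂ) be the nilpotent Jordan block, and let J_nᵀ be its transpose. Then the unital subalgebra of M_n(ℂ) generated by {J_n^i, (J_nᵀ)^{n−i}} is all of M_n(ℂ) if and only if gcd(i, n − i) = 1 (equivalently, gcd(n, i) = 1). -/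
open Matrix

/-!
Let `T_t` be the permutation matrix of the rotation `a ↦ a + t` of `ℤ/n`. Then
`J^i + (Jᵀ)^(n-i) = T_i` and `J^i = Q T_i`, where `Q` is the diagonal projection onto
`{a | a + i < n}`. If `gcd(i, n) = 1`, the powers of `T_i` are all the `T_t`; so the algebra
contains `Q`, its conjugate `Q'` by `T_1` (the projection onto the successors of that set), and
`E₀₀ = Q (1 - Q')`, since `0` is the only element of the set whose predecessor lies outside it.
Finally `E_ab = T_{-a} E₀₀ T_b`.

Conversely, if `d = gcd(i, n - i) > 1` and `ω` is a primitive `d`-th root of unity, then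
`diag(ω^a)` commutes with `J^i` and `(Jᵀ)^(n-i)` but not with `E₀₁`.
-/

namespace Matrix

section Translation

variable {R G : Type*} [Semiring R] [AddGroup G] [DecidableEq G]

def translation [Fintype G] (t : G) : Matrix G G R :=
  of fun a b => if a + t = b then 1 else 0

variable [Fintype G]

lemma translation_mul (t : G) (M : Matrix G G R) :
    translation t * M = of fun a b => M (a + t) b := by
  ext a b
  simp only [translation, of_apply, mul_apply, ite_mul, one_mul, zero_mul, Finset.sum_ite_eq,
    Finset.mem_univ, if_true]

lemma mul_translation (t : G) (M : Matrix G G R) :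
    M * translation t = of fun a b => M a (b - t) := by
  ext a b
  simp only [translation, of_apply, mul_apply, mul_ite, mul_one, mul_zero, ← eq_sub_iff_add_eq,
    Finset.sum_ite_eq', Finset.mem_univ, if_true]

lemma translation_mul_translation (s t : G) :
    (translation s * translation t : Matrix G G R) = translation (s + t) := by
  rw [translation_mul]
  ext a b
  simp [translation, add_assoc]

@[simp]
lemma translation_zero : (translation 0 : Matrix G G R) = 1 := by
  ext a b
  simp [translation, one_apply]

lemma translation_pow (t : G) (m : ℕ) :
    (translation t : Matrix G G R) ^ m = translation (m • t) := by
  induction m with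
  | zero => simp
  | succ m ih => rw [pow_succ, ih, translation_mul_translation, succ_nsmul]

lemma translation_mul_diagonal_mul_translation_neg (t : G) (d : G → R) :
    translation t * diagonal d * translation (-t) = diagonal fun a => d (a + t) := by
  ext a b
  simp [translation_mul, mul_translation, diagonal_apply]

lemma translation_neg_mul_single_zero_mul_translation (a b : G) :
    translation (-a) * single 0 0 (1 : R) * translation b = single a b 1 := by
  ext x y
  simp [translation_mul, mul_translation, single_apply, add_neg_eq_zero, sub_eq_zero, eq_comm]

end Translation

variable {R ι : Type*} [Fintype ι] [DecidableEq ι]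

lemma commute_diagonal_iff [CommRing R] [NoZeroDivisors R] {d : ι → R} {M : Matrix ι ι R} :
    Commute (diagonal d) M ↔ ∀ a b, M a b ≠ 0 → d a = d b := by
  simp only [commute_iff_eq, ← Matrix.ext_iff, diagonal_mul, mul_diagonal, mul_comm (d _),
    mul_eq_mul_left_iff, or_iff_not_imp_right]

lemma subalgebra_eq_top_of_single_mem [CommSemiring R] {S : Subalgebra R (Matrix ι ι R)}
    (h : ∀ a b, single a b (1 : R) ∈ S) : S = ⊤ := by
  refine eq_top_iff.2 fun M _ => ?_
  rw [matrix_eq_sum_single M]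
  refine sum_mem fun a _ => sum_mem fun b _ => ?_
  simpa [smul_single] using S.smul_mem (h a b) (M a b)

end Matrix

namespace Fin

variable {n : ℕ} [NeZero n]

lemma val_nsmul (m : ℕ) (a : Fin n) : ((m • a : Fin n) : ℕ) = m * a % n := by
  induction m with
  | zero => simp
  | succ m ih => rw [succ_nsmul, Fin.val_add, ih, Nat.mod_add_mod, Nat.succ_mul]

lemma exists_nsmul_eq_of_coprime {a : Fin n} (hco : Nat.Coprime a n) (t : Fin n) :
    ∃ m : ℕ, m • a = t := by
  obtain ⟨m, -, hm⟩ := Nat.exists_mul_mod_eq_of_coprime t hco (NeZero.ne n)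
  exact ⟨m, Fin.ext (by rw [val_nsmul, mul_comm, hm, Nat.mod_eq_of_lt t.isLt])⟩

lemma val_add_lt_and_not_sub_one_iff {i : ℕ} (hi : 0 < i) (hin : i < n) (a : Fin n) :
    ((a : ℕ) + i < n ∧ ¬((a - 1 : Fin n) : ℕ) + i < n) ↔ a = 0 := by
  obtain ⟨k, rfl⟩ : ∃ k, n = k + 1 := ⟨n - 1, by omega⟩
  rw [coe_sub_one]
  split_ifs with h <;> simp [h] <;> omega

end Fin

variable {n : ℕ}

lemma jordan_pow_apply (m : ℕ) (a b : Fin n) :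
    (jordan n ^ m) a b = if (a : ℕ) + m = b then 1 else 0 := by
  induction m generalizing b with
  | zero => simp [one_apply, Fin.ext_iff]
  | succ m ih =>
    simp_rw [pow_succ, mul_apply, ih]
    simp only [jordan, of_apply, mul_ite, mul_one, mul_zero]
    by_cases h : (a : ℕ) + (m + 1) = b
    · rw [if_pos h, Finset.sum_eq_single ⟨a + m, by omega⟩]
      · rw [if_pos (by simp; omega), if_pos rfl]
      · intro c _ hc
        rw [if_neg (fun h' => hc (Fin.ext (by simp at h' ⊢; omega)))]
      · simp
    · rw [if_neg h]
      refine Finset.sum_eq_zero fun c _ => ?_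
      split_ifs <;> first | rfl | omega

section Rotation

variable [NeZero n] {i : ℕ}

lemma jordan_pow_eq_diagonal_mul_translation (hin : i < n) :
    jordan n ^ i =
      diagonal (fun a : Fin n => if (a : ℕ) + i < n then 1 else 0) * translation ⟨i, hin⟩ := by
  ext a b
  rw [diagonal_mul, jordan_pow_apply]
  simp only [translation, of_apply, Fin.ext_iff, Fin.val_add_eq_ite]
  split_ifs <;> simp <;> omega

lemma transpose_jordan_pow_eq_diagonal_mul_translation (hin : i < n) :
    (jordan n)ᵀ ^ (n - i) =
      diagonal (fun a : Fin n => if (a : ℕ) + i < n then 0 else 1) * translation ⟨i, hin⟩ := by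
  ext a b
  rw [diagonal_mul, ← transpose_pow, transpose_apply, jordan_pow_apply]
  simp only [translation, of_apply, Fin.ext_iff, Fin.val_add_eq_ite]
  split_ifs <;> simp <;> omega

lemma jordan_pow_add_transpose_jordan_pow (hin : i < n) :
    jordan n ^ i + (jordan n)ᵀ ^ (n - i) = translation ⟨i, hin⟩ := by
  rw [jordan_pow_eq_diagonal_mul_translation hin,
    transpose_jordan_pow_eq_diagonal_mul_translation hin, ← add_mul, diagonal_add]
  convert one_mul _
  rw [← diagonal_one]
  congr 1
  ext a
  split_ifs <;> simp

lemma diagonal_mul_one_sub_diagonal_sub_one {R : Type*} [Ring R] (hi : 0 < i) (hin : i < n) :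
    diagonal (fun a : Fin n => if (a : ℕ) + i < n then (1 : R) else 0) *
        (1 - diagonal fun a => if ((a - 1 : Fin n) : ℕ) + i < n then 1 else 0) =
      single 0 0 1 := by
  rw [← diagonal_one, diagonal_sub, diagonal_mul_diagonal, ← diagonal_single]
  congr 1
  ext a
  simp only [Pi.single_apply, ← Fin.val_add_lt_and_not_sub_one_iff hi hin a]
  split_ifs <;> simp_all

end Rotation

lemma commute_diagonal_jordan_pow {ω : ℂ} {m : ℕ} (h : ω ^ m = 1) :
    Commute (diagonal fun a : Fin n => ω ^ (a : ℕ)) (jordan n ^ m) := by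
  refine commute_diagonal_iff.2 fun a b hab => ?_
  rw [jordan_pow_apply, ite_ne_right_iff] at hab
  rw [← hab.1, pow_add, h, mul_one]

lemma commute_diagonal_transpose_jordan_pow {ω : ℂ} {m : ℕ} (h : ω ^ m = 1) :
    Commute (diagonal fun a : Fin n => ω ^ (a : ℕ)) ((jordan n)ᵀ ^ m) := by
  refine commute_diagonal_iff.2 fun a b hab => ?_
  rw [← transpose_pow, transpose_apply, jordan_pow_apply, ite_ne_right_iff] at hab
  rw [← hab.1, pow_add, h, mul_one]

theorem gcd_eq_one_of_adjoin_jordan_pow_eq_top {i : ℕ} (hi : 0 < i) (hin : i < n)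
    (htop : Algebra.adjoin ℂ {jordan n ^ i, (jordan n)ᵀ ^ (n - i)} = ⊤) :
    Nat.gcd i (n - i) = 1 := by
  by_contra hgcd
  have hd : 1 < Nat.gcd i (n - i) := by have := Nat.gcd_pos_of_pos_left (n - i) hi; omega
  obtain ⟨ω, hω⟩ : ∃ ω : ℂ, IsPrimitiveRoot ω (Nat.gcd i (n - i)) :=
    ⟨_, Complex.isPrimitiveRoot_exp _ (by omega)⟩
  have hgen : ∀ M ∈ ({jordan n ^ i, (jordan n)ᵀ ^ (n - i)} : Set _),
      Commute (diagonal fun a : Fin n => ω ^ (a : ℕ)) M := by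
    rintro M (rfl | rfl)
    · exact commute_diagonal_jordan_pow ((hω.pow_eq_one_iff_dvd _).2 (Nat.gcd_dvd_left _ _))
    · exact commute_diagonal_transpose_jordan_pow
        ((hω.pow_eq_one_iff_dvd _).2 (Nat.gcd_dvd_right _ _))
  have h01 : Commute (diagonal fun a : Fin n => ω ^ (a : ℕ))
      (single ⟨0, by omega⟩ ⟨1, by omega⟩ 1) :=
    Algebra.commute_of_mem_adjoin_of_forall_mem_commute (htop ▸ Algebra.mem_top) hgen
  have hω1 := commute_diagonal_iff.1 h01 ⟨0, by omega⟩ ⟨1, by omega⟩ (by simp)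
  exact hω.ne_one hd (by simpa using hω1.symm)

theorem adjoin_jordan_pow_eq_top {i : ℕ} (hi : 0 < i) (hin : i < n) (hco : Nat.Coprime i n) :
    Algebra.adjoin ℂ {jordan n ^ i, (jordan n)ᵀ ^ (n - i)} = ⊤ := by
  have : NeZero n := ⟨by omega⟩
  set S := Algebra.adjoin ℂ {jordan n ^ i, (jordan n)ᵀ ^ (n - i)}
  have hJ : jordan n ^ i ∈ S := Algebra.subset_adjoin (by simp)
  have hJt : (jordan n)ᵀ ^ (n - i) ∈ S := Algebra.subset_adjoin (by simp)
  have hrot : translation ⟨i, hin⟩ ∈ S :=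
    jordan_pow_add_transpose_jordan_pow hin ▸ add_mem hJ hJt
  have htrans : ∀ t, translation t ∈ S := fun t => by
    obtain ⟨m, rfl⟩ := Fin.exists_nsmul_eq_of_coprime (a := ⟨i, hin⟩) hco t
    rw [← translation_pow]
    exact pow_mem hrot m
  set q : Fin n → ℂ := fun a => if (a : ℕ) + i < n then 1 else 0
  have hq : diagonal q ∈ S := by
    have : diagonal q = jordan n ^ i * translation (-⟨i, hin⟩) := by
      rw [jordan_pow_eq_diagonal_mul_translation hin, mul_assoc, translation_mul_translation,
        add_neg_cancel, translation_zero, mul_one]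
    exact this ▸ mul_mem hJ (htrans _)
  have hq_pred : diagonal (fun a => q (a - 1)) ∈ S := by
    simp_rw [sub_eq_add_neg, ← translation_mul_diagonal_mul_translation_neg, neg_neg]
    exact mul_mem (mul_mem (htrans _) hq) (htrans _)
  have h00 : single 0 0 (1 : ℂ) ∈ S := by
    rw [← diagonal_mul_one_sub_diagonal_sub_one hi hin]
    exact mul_mem hq (sub_mem (one_mem S) hq_pred)
  refine subalgebra_eq_top_of_single_mem fun a b => ?_
  rw [← translation_neg_mul_single_zero_mul_translation]
  exact mul_mem (mul_mem (htrans _) h00) (htrans _)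

/-- For `0 < i < n`, the matrices `J_n^i` and `(J_nᵀ)^{n-i}` generate `M_n(ℂ)` as a unital
algebra if and only if `gcd(i, n - i) = 1`. -/
theorem stmt_11 (n i : ℕ) (hi : 0 < i) (hin : i < n) :
    Algebra.adjoin ℂ
        ({jordan n ^ i, (jordan n)ᵀ ^ (n - i)} : Set (Matrix (Fin n) (Fin n) ℂ)) = ⊤ ↔
      Nat.gcd i (n - i) = 1 :=
  ⟨gcd_eq_one_of_adjoin_jordan_pow_eq_top hi hin,
    fun hgcd => adjoin_jordan_pow_eq_top hi hin ((Nat.coprime_sub_self_right hin.le).1 hgcd)⟩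
end

section
/- Let n ≥ 2 and i be positive integers with i < n and gcd(n, i) = 1. Define V(j) ⊆ M_n(ℂ) as the subspace of matrices supported on the j-diagonal (A ∈ V(j) iff A_{a,b} = 0 whenever b − a ≠ j), and define W(n,i) = V(n − 2i) + V(−2i) if 2i < n, W(n,i) = V(n − 2i) + V(2n − 2i) if 2i > n, and W(n,i) = V(0) if n = 2 and i = 1. Then the ℂ-linear span of all products of exactly n − 2 factors, each factor from {J_n^i, (J_nᵀ)^{n−i}} (with the empty product interpreted as the identity matrix when n = 2), is a proper subspace of W(n,i). -/
open Matrix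

/-- `V(j)`: the subspace of `M_n(ℂ)` of matrices supported on the `j`-diagonal. -/
noncomputable def vdiag (n : ℕ) (j : ℤ) : Submodule ℂ (Matrix (Fin n) (Fin n) ℂ) where
  carrier := {A | ∀ a b : Fin n, (b : ℤ) - (a : ℤ) ≠ j → A a b = 0}
  add_mem' := fun {A B} hA hB a b h => by
    simp [Matrix.add_apply, hA a b h, hB a b h]
  zero_mem' := fun a b _ => rfl
  smul_mem' := fun c {A} hA a b h => by
    simp [Matrix.smul_apply, hA a b h]

/-!
`J^i` and `(Jᵀ)^(n-i)` are the partial shift matrices with ones at `(a, a + i)` and at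
`(a, a + i - n)`. The `(a, b)` entry of a product of such shifts `e₁, …, e_k` is `1` exactly when
the walk `a, a + e₁, a + e₁ + e₂, …` stays in `[0, n)` and ends at `b`. Every step is `≡ i (mod n)`,
so for `k = n - 2` we get `b - a ≡ -2i (mod n)`, which confines the product to the two diagonals
spanning `W(n,i)`. Moving the start of the walk from `i - 1` to `i` moves every point by one; since
`gcd(n, i) = 1` no point of the walk from `i - 1` is `≡ -1 (mod n)`, so the two walks leave
`[0, n)` together, and every product has equal entries at `(i - 1, n - i - 1)` and `(i, n - i)`.
The matrix unit at `(i - 1, n - i - 1)` lies in `V(n - 2i) ≤ W(n,i)` but breaks this relation.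
-/

def StaysInRange (n : ℕ) : ℤ → List ℤ → Prop
  | _, [] => True
  | a, e :: ε => (0 ≤ a + e ∧ a + e < n) ∧ StaysInRange n (a + e) ε

theorem List.sum_modEq_length_mul {n s : ℤ} :
    ∀ {ε : List ℤ}, (∀ e ∈ ε, e ≡ s [ZMOD n]) → ε.sum ≡ ε.length * s [ZMOD n]
  | [], _ => by simp [Int.ModEq.refl]
  | e :: ε, h => by
    have := (h e List.mem_cons_self).add (List.sum_modEq_length_mul fun x hx => h x (.tail _ hx))
    rw [List.sum_cons, List.length_cons]
    convert this using 1
    push_cast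
    ring

theorem staysInRange_add_one_iff {n : ℕ} {s : ℤ} :
    ∀ {ε : List ℤ} {a : ℤ}, (∀ e ∈ ε, e ≡ s [ZMOD n]) →
      (∀ t : ℕ, 1 ≤ t → t ≤ ε.length → ¬ a + 1 + t * s ≡ 0 [ZMOD n]) →
      (StaysInRange n (a + 1) ε ↔ StaysInRange n a ε)
  | [], _, _, _ => Iff.rfl
  | e :: ε, a, hε, h => by
    have hes : a + 1 + 1 * s ≡ a + e + 1 [ZMOD n] := by
      convert ((hε e List.mem_cons_self).symm.add_left (a + 1)) using 1 <;> ring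
    have hwrap : ¬ (n : ℤ) ∣ a + e + 1 := fun hd =>
      h 1 le_rfl (by simp) (hes.trans ((Int.modEq_zero_iff_dvd).2 hd))
    have hstep : (0 ≤ a + 1 + e ∧ a + 1 + e < n) ↔ (0 ≤ a + e ∧ a + e < n) := by
      have h₁ : a + e ≠ -1 := fun he => hwrap ⟨0, by omega⟩
      have h₂ : a + e ≠ n - 1 := fun he => hwrap ⟨1, by omega⟩
      omega
    have ih := staysInRange_add_one_iff (a := a + e) (fun x hx => hε x (.tail _ hx))
      fun t _ ht₂ hmod => by
        have hshift : a + 1 + (t + 1 : ℕ) * s ≡ a + e + 1 + t * s [ZMOD n] := by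
          convert (hε e List.mem_cons_self).symm.add_left (a + 1 + t * s) using 1 <;> push_cast <;>
            ring
        exact h (t + 1) (by omega) (by rw [List.length_cons]; omega) (hshift.trans hmod)
    rw [StaysInRange, StaysInRange, hstep, add_right_comm, ih]

def shiftMat (R : Type*) [Zero R] [One R] (n : ℕ) (s : ℤ) : Matrix (Fin n) (Fin n) R :=
  of fun a b => if (b : ℤ) = a + s then 1 else 0

section ShiftMat

variable {R : Type*} [Semiring R] {n : ℕ}

theorem shiftMat_mul_apply (s : ℤ) (A : Matrix (Fin n) (Fin n) R) (a b : Fin n) :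
    (shiftMat R n s * A) a b =
      if h : 0 ≤ (a : ℤ) + s ∧ (a : ℤ) + s < n then A ⟨((a : ℤ) + s).toNat, by omega⟩ b
      else 0 := by
  simp only [mul_apply, shiftMat, of_apply, ite_mul, one_mul, zero_mul]
  split_ifs with h
  · rw [Finset.sum_eq_single ⟨((a : ℤ) + s).toNat, by omega⟩]
    · simp [h.1]
    · intro c _ hc
      exact if_neg fun hca => hc (Fin.ext (by dsimp only; omega))
    · simp
  · exact Finset.sum_eq_zero fun c _ => if_neg fun hca => h (by omega)

theorem shiftMat_mul_shiftMat {s t : ℤ} (hs : 0 ≤ s) (ht : 0 ≤ t) :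
    shiftMat R n s * shiftMat R n t = shiftMat R n (s + t) := by
  ext a b
  rw [shiftMat_mul_apply]
  simp only [shiftMat, of_apply]
  split_ifs <;> first | rfl | omega

theorem shiftMat_transpose (s : ℤ) : (shiftMat R n s)ᵀ = shiftMat R n (-s) := by
  ext a b
  simp only [shiftMat, transpose_apply, of_apply]
  congr 1
  exact propext (by omega)

open Classical in
theorem prod_map_shiftMat_apply (ε : List ℤ) (a b : Fin n) :
    (ε.map (shiftMat R n)).prod a b =
      if StaysInRange n a ε ∧ (b : ℤ) = a + ε.sum then 1 else 0 := by
  induction ε generalizing a with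
  | nil =>
    simp only [List.map_nil, List.prod_nil, one_apply, StaysInRange, List.sum_nil, true_and,
      add_zero, Fin.ext_iff, eq_comm]
    congr 1
    exact propext Int.natCast_inj.symm
  | cons e ε ih =>
    rw [List.map_cons, List.prod_cons, shiftMat_mul_apply]
    by_cases h : 0 ≤ (a : ℤ) + e ∧ (a : ℤ) + e < n
    · have hc : ((⟨((a : ℤ) + e).toNat, by omega⟩ : Fin n) : ℤ) = a + e := by dsimp only; omega
      rw [dif_pos h, ih, hc]
      simp only [StaysInRange, h, true_and, List.sum_cons, add_assoc]
    · rw [dif_neg h, if_neg]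
      exact fun hs => h hs.1.1

theorem eq_add_sum_of_prod_map_shiftMat_apply_ne_zero {ε : List ℤ} {a b : Fin n}
    (h : (ε.map (shiftMat R n)).prod a b ≠ 0) : (b : ℤ) = a + ε.sum := by
  classical
  rw [prod_map_shiftMat_apply, ne_eq, ite_eq_right_iff, not_forall] at h
  exact h.1.2

theorem prod_map_shiftMat_apply_add_one {s : ℤ} {ε : List ℤ} (hε : ∀ e ∈ ε, e ≡ s [ZMOD n])
    {a b a' b' : Fin n} (ha : (a' : ℤ) = a + 1) (hb : (b' : ℤ) = b + 1)
    (h : ∀ t : ℕ, 1 ≤ t → t ≤ ε.length → ¬ (a : ℤ) + 1 + t * s ≡ 0 [ZMOD n]) :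
    (ε.map (shiftMat R n)).prod a' b' = (ε.map (shiftMat R n)).prod a b := by
  classical
  rw [prod_map_shiftMat_apply, prod_map_shiftMat_apply, ha, hb, staysInRange_add_one_iff hε h]
  congr 2
  exact propext (by omega)

end ShiftMat

theorem jordan_eq_shiftMat (n : ℕ) : jordan n = shiftMat ℂ n 1 := by
  ext a b
  simp only [jordan, shiftMat, of_apply]
  congr 1
  exact propext (by omega)

theorem jordan_pow_eq_shiftMat (n k : ℕ) : jordan n ^ k = shiftMat ℂ n k := by
  induction k with
  | zero => ext a b; simp [shiftMat, one_apply, Fin.ext_iff, eq_comm]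
  | succ k ih =>
    rw [pow_succ, ih, jordan_eq_shiftMat, shiftMat_mul_shiftMat (by positivity) zero_le_one]
    push_cast
    rfl

theorem jordan_transpose_pow_eq_shiftMat (n k : ℕ) : (jordan n)ᵀ ^ k = shiftMat ℂ n (-k) := by
  rw [← transpose_pow, jordan_pow_eq_shiftMat, shiftMat_transpose]

theorem single_mem_vdiag {n : ℕ} {a b : Fin n} {j : ℤ} (h : (b : ℤ) - a = j) (c : ℂ) :
    single a b c ∈ vdiag n j := by
  intro a' b' h'
  rw [single_apply_of_ne]
  rintro ⟨rfl, rfl⟩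
  exact h' h

theorem mem_vdiag_sup_vdiag {n : ℕ} {d₁ d₂ : ℤ} {A : Matrix (Fin n) (Fin n) ℂ}
    (h : ∀ a b : Fin n, A a b ≠ 0 → (b : ℤ) - a = d₁ ∨ (b : ℤ) - a = d₂) :
    A ∈ vdiag n d₁ ⊔ vdiag n d₂ := by
  refine Submodule.mem_sup.2 ⟨of fun a b => if (b : ℤ) - a = d₁ then A a b else 0, ?_,
    of fun a b => if (b : ℤ) - a = d₁ then 0 else A a b, ?_, ?_⟩
  · exact fun a b hab => if_neg hab
  · intro a b hab
    simp only [of_apply, ite_eq_left_iff]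
    exact fun hd₁ => not_not.1 fun hA => (h a b hA).elim hd₁ hab
  · ext a b
    simp only [Matrix.add_apply, of_apply]
    split_ifs <;> simp

theorem eq_neg_two_mul_or_of_dvd {n d i : ℤ} (hd : n ∣ d + 2 * i) (hdn : -n < d) (hdn' : d < n)
    (hi : 0 ≤ i) (hin : i < n) : d = -2 * i ∨ d = n - 2 * i ∨ d = 2 * n - 2 * i := by
  obtain ⟨k, hk⟩ := hd
  have hk₀ : 0 ≤ k := by nlinarith
  have hk₂ : k ≤ 2 := by nlinarith
  interval_cases k <;> omega

noncomputable def wSubspace (n i : ℕ) : Submodule ℂ (Matrix (Fin n) (Fin n) ℂ) :=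
  if 2 * i < n then vdiag n ((n : ℤ) - 2 * i) ⊔ vdiag n (-(2 * i : ℤ))
  else if n < 2 * i then vdiag n ((n : ℤ) - 2 * i) ⊔ vdiag n (2 * (n : ℤ) - 2 * i)
  else vdiag n 0

theorem vdiag_le_wSubspace (n i : ℕ) : vdiag n ((n : ℤ) - 2 * i) ≤ wSubspace n i := by
  unfold wSubspace
  split_ifs
  · exact le_sup_left
  · exact le_sup_left
  · rw [show (n : ℤ) - 2 * i = 0 by omega]

theorem mem_wSubspace_of_dvd {n i : ℕ} (hin : i < n) {A : Matrix (Fin n) (Fin n) ℂ}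
    (h : ∀ a b : Fin n, A a b ≠ 0 → (n : ℤ) ∣ (b : ℤ) - a + 2 * i) : A ∈ wSubspace n i := by
  have hcases (a b : Fin n) (hab : A a b ≠ 0) :=
    eq_neg_two_mul_or_of_dvd (h a b hab) (by omega) (by omega) (Int.natCast_nonneg i)
      (by exact_mod_cast hin)
  unfold wSubspace
  split_ifs with h₁ h₂
  · exact mem_vdiag_sup_vdiag fun a b hab => by have := hcases a b hab; omega
  · exact mem_vdiag_sup_vdiag fun a b hab => by have := hcases a b hab; omega
  · exact fun a b hab => not_not.1 fun hA => by have := hcases a b hA; omega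

def jordanWords (n i k : ℕ) : Set (Matrix (Fin n) (Fin n) ℂ) :=
  {M | ∃ w : List (Matrix (Fin n) (Fin n) ℂ), w.length = k ∧
    (∀ x ∈ w, x ∈ ({jordan n ^ i, (jordan n)ᵀ ^ (n - i)} : Set (Matrix (Fin n) (Fin n) ℂ))) ∧
    M = w.prod}

theorem exists_shifts_of_mem_jordanWords {n i k : ℕ} (hin : i ≤ n) {M : Matrix (Fin n) (Fin n) ℂ}
    (hM : M ∈ jordanWords n i k) :
    ∃ ε : List ℤ, ε.length = k ∧ (∀ e ∈ ε, e ≡ i [ZMOD n]) ∧ M = (ε.map (shiftMat ℂ n)).prod := by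
  obtain ⟨w, rfl, hw, rfl⟩ := hM
  have hrange : w ∈ Set.range (List.map (shiftMat ℂ n ∘ fun b : Bool => cond b i (i - n))) := by
    rw [Set.range_list_map]
    intro x hx
    rcases hw x hx with rfl | rfl
    · exact ⟨true, (jordan_pow_eq_shiftMat n i).symm⟩
    · refine ⟨false, ?_⟩
      simp [jordan_transpose_pow_eq_shiftMat, Nat.cast_sub hin]
  obtain ⟨w, rfl⟩ := hrange
  refine ⟨w.map fun b => cond b i (i - n), by simp, ?_, by simp⟩
  simp only [List.mem_map]
  rintro _ ⟨(_ | _), -, rfl⟩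
  · exact Int.modEq_iff_dvd.2 ⟨1, by simp⟩
  · exact Int.ModEq.refl _

theorem jordanWords_subset_wSubspace {n i : ℕ} (hn : 2 ≤ n) (hin : i < n) :
    jordanWords n i (n - 2) ⊆ wSubspace n i := by
  intro M hM
  obtain ⟨ε, hlen, hε, rfl⟩ := exists_shifts_of_mem_jordanWords hin.le hM
  refine mem_wSubspace_of_dvd hin fun a b hab => ?_
  have hsum := (List.sum_modEq_length_mul hε).symm.dvd
  rw [hlen, Nat.cast_sub hn, Nat.cast_ofNat] at hsum
  have hb := eq_add_sum_of_prod_map_shiftMat_apply_ne_zero hab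
  rw [show (b : ℤ) - a + 2 * i = ε.sum - (n - 2) * i + n * i by linear_combination hb]
  exact dvd_add hsum (dvd_mul_right _ _)

theorem apply_eq_apply_of_mem_jordanWords {n i : ℕ} (hn : 2 ≤ n) (hi : 0 < i) (hin : i < n)
    (hgcd : Nat.gcd n i = 1) {M : Matrix (Fin n) (Fin n) ℂ} (hM : M ∈ jordanWords n i (n - 2)) :
    M ⟨i - 1, by omega⟩ ⟨n - i - 1, by omega⟩ = M ⟨i, hin⟩ ⟨n - i, by omega⟩ := by
  obtain ⟨ε, hlen, hε, rfl⟩ := exists_shifts_of_mem_jordanWords hin.le hM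
  refine (prod_map_shiftMat_apply_add_one hε (by dsimp only; omega) (by dsimp only; omega) ?_).symm
  intro t ht₁ ht₂ hdvd
  rw [Int.modEq_zero_iff_dvd, show ((i - 1 : ℕ) : ℤ) + 1 + t * i = ((t + 1) * i : ℕ) by
    push_cast [Nat.cast_sub hi]; ring, Int.natCast_dvd_natCast] at hdvd
  have := Nat.le_of_dvd (by omega) (Nat.Coprime.dvd_of_dvd_mul_right hgcd hdvd)
  omega

/-- For `n ≥ 2`, `0 < i < n` with `gcd(n, i) = 1`, the span of all products of exactly
`n - 2` factors from `{J_n^i, (J_nᵀ)^{n-i}}` is a proper subspace of `W(n,i)`, where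
`W(n,i) = V(n-2i) + V(-2i)` if `2i < n`, `W(n,i) = V(n-2i) + V(2n-2i)` if `2i > n`, and
`W(n,i) = V(0)` if `n = 2`, `i = 1`. -/
theorem stmt_15 (n i : ℕ) (hn : 2 ≤ n) (hi : 0 < i) (hin : i < n)
    (hgcd : Nat.gcd n i = 1) :
    let W : Submodule ℂ (Matrix (Fin n) (Fin n) ℂ) :=
      if 2 * i < n then vdiag n ((n : ℤ) - 2 * i) ⊔ vdiag n (-(2 * i : ℤ))
      else if n < 2 * i then vdiag n ((n : ℤ) - 2 * i) ⊔ vdiag n (2 * (n : ℤ) - 2 * i)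
      else vdiag n 0
    Submodule.span ℂ {M : Matrix (Fin n) (Fin n) ℂ |
        ∃ w : List (Matrix (Fin n) (Fin n) ℂ), w.length = n - 2 ∧
          (∀ x ∈ w, x ∈ ({jordan n ^ i, (jordan n)ᵀ ^ (n - i)} :
            Set (Matrix (Fin n) (Fin n) ℂ))) ∧ M = w.prod} < W := by
  show Submodule.span ℂ (jordanWords n i (n - 2)) < wSubspace n i
  set r₀ : Fin n := ⟨i - 1, by omega⟩
  set c₀ : Fin n := ⟨n - i - 1, by omega⟩
  set r₁ : Fin n := ⟨i, hin⟩
  set c₁ : Fin n := ⟨n - i, by omega⟩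
  have hspan : Submodule.span ℂ (jordanWords n i (n - 2)) ≤
      LinearMap.eqLocus (entryLinearMap ℂ ℂ r₀ c₀) (entryLinearMap ℂ ℂ r₁ c₁) :=
    Submodule.span_le.2 fun M hM => apply_eq_apply_of_mem_jordanWords hn hi hin hgcd hM
  refine SetLike.lt_iff_le_and_exists.2 ⟨Submodule.span_le.2 (jordanWords_subset_wSubspace hn hin),
    single r₀ c₀ 1, vdiag_le_wSubspace n i (single_mem_vdiag (by dsimp only [r₀, c₀]; omega) 1),
    fun hE => ?_⟩
  have hr : r₀ ≠ r₁ := by rw [Ne, Fin.ext_iff]; dsimp only [r₀, r₁]; omega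
  simpa [single_apply_of_row_ne hr] using hspan hE
end
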